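/- Composition can strictly increase the privacy score: there exist a finite sample universe X with labeling function L : X → Y and independent random bijections T_A and T'_A of X, each uniformly distributed on a family of exactly two bijections and each independent of the random dataset 𝒳_A, such that for every distribution of 𝒳_A satisfying Assumption 1, H(T_A | Obs(T_A)) = 1 and H(T'_A | Obs(T'_A)) = 1, while H(T'_A ∘ T_A | Obs(T'_A ∘ T_A)) = 2. -/
import Mathlib


open scoped Classical

noncomputable def Pr {Ω : Type*} [Fintype Ω] (w : Ω → ℝ) (A : Set Ω) : ℝ :=
  ∑ ω, if ω ∈ A then w ω else 0

noncomputable def entropy {Ω α : Type*} [Fintype Ω] [Fintype α] (w : Ω → ℝ) (V : Ω → α) : ℝ :=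
  -∑ a, Pr w {ω | V ω = a} * Real.logb 2 (Pr w {ω | V ω = a})

noncomputable def condEntropy {Ω α β : Type*} [Fintype Ω] [Fintype α] [Fintype β]
    (w : Ω → ℝ) (V : Ω → α) (W : Ω → β) : ℝ :=
  entropy w (fun ω => (V ω, W ω)) - entropy w W

section helpers
variable {Ω : Type*} [Fintype Ω]

lemma Pr_congr {w : Ω → ℝ} {A B : Set Ω} (h : ∀ ω, ω ∈ A ↔ ω ∈ B) : Pr w A = Pr w B :=
  congrArg _ (Set.ext h)

lemma Pr_nonneg {w : Ω → ℝ} (hw : ∀ ω, 0 ≤ w ω) (A : Set Ω) : 0 ≤ Pr w A := by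
  refine Finset.sum_nonneg fun ω _ => ?_
  split
  · exact hw ω
  · exact le_refl 0

lemma Pr_empty_of (w : Ω → ℝ) {A : Set Ω} (h : ∀ ω, ω ∉ A) : Pr w A = 0 :=
  Finset.sum_eq_zero fun ω _ => if_neg (h ω)

lemma Pr_fiber {α : Type*} [Fintype α] (w : Ω → ℝ) (A : Set Ω) (f : Ω → α) :
    Pr w A = ∑ a, Pr w {ω | ω ∈ A ∧ f ω = a} := by
  unfold Pr
  rw [Finset.sum_comm]
  refine Finset.sum_congr rfl fun ω _ => ?_
  by_cases h : ω ∈ A <;> simp [h]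

lemma Pr_total {α : Type*} [Fintype α] (w : Ω → ℝ) (f : Ω → α) :
    ∑ a, Pr w {ω | f ω = a} = ∑ ω, w ω := by
  have := Pr_fiber w Set.univ f
  simp only [Set.mem_univ, true_and] at this
  rw [← this]
  unfold Pr
  simp

end helpers

lemma prod_logb_mul {x y : ℝ} (hx : 0 ≤ x) (hy : 0 ≤ y) :
    x * y * Real.logb 2 (x * y) = x * y * Real.logb 2 x + x * y * Real.logb 2 y := by
  rcases eq_or_lt_of_le hx with h | h
  · simp [← h]
  rcases eq_or_lt_of_le hy with h' | h'
  · simp [← h']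
  rw [Real.logb_mul h.ne' h'.ne', mul_add]

lemma condEntropy_eq_entropy {Ω α β : Type*} [Fintype Ω] [Fintype α] [Fintype β] (w : Ω → ℝ)
    (hw : ∀ ω, 0 ≤ w ω) (hw1 : ∑ ω, w ω = 1) (V : Ω → α) (W : Ω → β)
    (h : ∀ a b, Pr w {ω | V ω = a ∧ W ω = b}
        = Pr w {ω | V ω = a} * Pr w {ω | W ω = b}) :
    condEntropy w V W = entropy w V := by
  have hpa : ∀ a, 0 ≤ Pr w {ω | V ω = a} := fun a => Pr_nonneg hw _
  have hqb : ∀ b, 0 ≤ Pr w {ω | W ω = b} := fun b => Pr_nonneg hw _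
  have hpt : ∑ a, Pr w {ω | V ω = a} = 1 := by rw [Pr_total w V, hw1]
  have hqt : ∑ b, Pr w {ω | W ω = b} = 1 := by rw [Pr_total w W, hw1]
  have hjoint : entropy w (fun ω => (V ω, W ω)) = entropy w V + entropy w W := by
    unfold entropy
    rw [Fintype.sum_prod_type]
    have key : ∀ a b, Pr w {ω | (V ω, W ω) = (a, b)}
        = Pr w {ω | V ω = a} * Pr w {ω | W ω = b} := by
      intro a b
      rw [← h a b]
      exact Pr_congr fun ω => by simp [Prod.ext_iff]
    have step1 : ∀ a : α, ∑ b, Pr w {ω | (V ω, W ω) = (a, b)}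
          * Real.logb 2 (Pr w {ω | (V ω, W ω) = (a, b)})
        = Pr w {ω | V ω = a} * Real.logb 2 (Pr w {ω | V ω = a})
          + Pr w {ω | V ω = a}
            * ∑ b, Pr w {ω | W ω = b} * Real.logb 2 (Pr w {ω | W ω = b}) := by
      intro a
      have : ∀ b : β, Pr w {ω | (V ω, W ω) = (a, b)}
            * Real.logb 2 (Pr w {ω | (V ω, W ω) = (a, b)})
          = (Pr w {ω | V ω = a} * Real.logb 2 (Pr w {ω | V ω = a})) * Pr w {ω | W ω = b}
            + Pr w {ω | V ω = a}
              * (Pr w {ω | W ω = b} * Real.logb 2 (Pr w {ω | W ω = b})) := by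
        intro b
        rw [key a b, prod_logb_mul (hpa a) (hqb b)]
        ring
      rw [Finset.sum_congr rfl fun b _ => this b, Finset.sum_add_distrib,
        ← Finset.mul_sum, ← Finset.mul_sum, hqt, mul_one]
    rw [Finset.sum_congr rfl fun a _ => step1 a, Finset.sum_add_distrib, ← Finset.sum_mul,
      hpt, one_mul]
    ring
  unfold condEntropy
  rw [hjoint]
  ring

lemma entropy_uniform {Ω α : Type*} [Fintype Ω] [Fintype α] (w : Ω → ℝ) (V : Ω → α)
    (E : Finset α) (n : ℕ) (hcard : E.card = n) (hn : 0 < n)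
    (h1 : ∀ a ∈ E, Pr w {ω | V ω = a} = 1 / n)
    (h0 : ∀ a ∉ E, Pr w {ω | V ω = a} = 0) :
    entropy w V = Real.logb 2 n := by
  unfold entropy
  rw [← Finset.sum_subset E.subset_univ (fun a _ ha => by rw [h0 a ha, zero_mul]),
    Finset.sum_congr rfl (fun a ha => by rw [h1 a ha]), Finset.sum_const, hcard]
  have hn' : (0 : ℝ) < n := by exact_mod_cast hn
  rw [one_div, Real.logb_inv, nsmul_eq_mul]
  field_simp

lemma obs_indep {Ω : Type*} [Fintype Ω] {nX : ℕ}
    (w : Ω → ℝ) (hw : ∀ ω, 0 ≤ w ω) (hw1 : ∑ ω, w ω = 1)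
    (XA : Ω → Finset (Fin nX)) (V : Ω → Fin nX → Fin nX)
    (G : Finset (Fin nX → Fin nX)) (hG : ∀ T ∈ G, Function.Bijective T)
    (hsupp : ∀ T ∉ G, Pr w {ω | V ω = T} = 0)
    (hindep : ∀ T S, Pr w {ω | V ω = T ∧ XA ω = S}
        = Pr w {ω | V ω = T} * Pr w {ω | XA ω = S})
    (hA1 : ∀ S₁ S₂ : Finset (Fin nX), S₁.card = S₂.card →
        Pr w {ω | XA ω = S₁} = Pr w {ω | XA ω = S₂})
    (T : Fin nX → Fin nX) (s : Finset (Fin nX × Fin 1)) :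
    Pr w {ω | V ω = T ∧ (XA ω).image (fun x => (V ω x, (0 : Fin 1))) = s}
      = Pr w {ω | V ω = T}
        * Pr w {ω | (XA ω).image (fun x => (V ω x, (0 : Fin 1))) = s} := by
  set q : ℝ := ∑ S : Finset (Fin nX),
    if S.image (fun x => (x, (0 : Fin 1))) = s then Pr w {ω | XA ω = S} else 0 with hqdef
  -- Step A: joint formula
  have hjoint : ∀ T₀ : Fin nX → Fin nX,
      Pr w {ω | V ω = T₀ ∧ (XA ω).image (fun x => (V ω x, (0 : Fin 1))) = s}
        = Pr w {ω | V ω = T₀} * ∑ S : Finset (Fin nX),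
            (if S.image (fun x => (T₀ x, (0 : Fin 1))) = s
              then Pr w {ω | XA ω = S} else 0) := by
    intro T₀
    rw [Pr_fiber w _ XA, Finset.mul_sum]
    refine Finset.sum_congr rfl fun S _ => ?_
    by_cases hs : S.image (fun x => (T₀ x, (0 : Fin 1))) = s
    · rw [if_pos hs, ← hindep T₀ S]
      refine Pr_congr fun ω => ?_
      simp only [Set.mem_setOf_eq]
      constructor
      · rintro ⟨⟨h1, _⟩, h3⟩; exact ⟨h1, h3⟩
      · rintro ⟨h1, h3⟩
        refine ⟨⟨h1, ?_⟩, h3⟩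
        rw [h1, h3, hs]
    · rw [if_neg hs, mul_zero]
      refine Pr_empty_of w fun ω hω => ?_
      simp only [Set.mem_setOf_eq] at hω
      obtain ⟨⟨h1, h2⟩, h3⟩ := hω
      rw [h1, h3] at h2
      exact hs h2
  -- Step B: the inner sum is independent of the bijection
  have hq : ∀ T₀ : Fin nX → Fin nX, Function.Bijective T₀ →
      (∑ S : Finset (Fin nX),
        if S.image (fun x => (T₀ x, (0 : Fin 1))) = s
          then Pr w {ω | XA ω = S} else 0) = q := by
    intro T₀ hT₀
    set E := Equiv.ofBijective T₀ hT₀ with hE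
    have hEapp : ∀ x, E x = T₀ x := fun x => rfl
    have key : ∀ S : Finset (Fin nX),
        (if S.image (fun x => (T₀ x, (0 : Fin 1))) = s then Pr w {ω | XA ω = S} else 0)
        = (fun S' : Finset (Fin nX) =>
            if S'.image (fun x => (x, (0 : Fin 1))) = s then Pr w {ω | XA ω = S'} else 0)
            ((Equiv.finsetCongr E) S) := by
      intro S
      have h1 : (Equiv.finsetCongr E) S = S.image T₀ := by
        rw [Equiv.finsetCongr_apply, Finset.map_eq_image]
        rfl
      dsimp only
      rw [h1, Finset.image_image]
      have h2 : ((fun x => (x, (0 : Fin 1))) ∘ T₀) = fun x => (T₀ x, (0 : Fin 1)) := rfl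
      rw [h2]
      congr 1
      exact hA1 S (S.image T₀) (Finset.card_image_of_injective S hT₀.injective).symm
    rw [Finset.sum_congr rfl fun S _ => key S, hqdef]
    exact Equiv.sum_comp (Equiv.finsetCongr E)
      (fun S' : Finset (Fin nX) =>
        if S'.image (fun x => (x, (0 : Fin 1))) = s then Pr w {ω | XA ω = S'} else 0)
  -- Step C: the marginal equals q
  have hmarg : Pr w {ω | (XA ω).image (fun x => (V ω x, (0 : Fin 1))) = s} = q := by
    rw [Pr_fiber w _ V]
    simp only [Set.mem_setOf_eq]
    have : ∀ T₀ : Fin nX → Fin nX,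
        Pr w {ω | (XA ω).image (fun x => (V ω x, (0 : Fin 1))) = s ∧ V ω = T₀}
          = Pr w {ω | V ω = T₀ ∧ (XA ω).image (fun x => (V ω x, (0 : Fin 1))) = s} :=
      fun T₀ => Pr_congr fun ω => and_comm
    rw [Finset.sum_congr rfl fun T₀ _ => (this T₀).trans (hjoint T₀)]
    have vanish : ∀ T₀ ∈ Finset.univ, T₀ ∉ G →
        Pr w {ω | V ω = T₀} * (∑ S : Finset (Fin nX),
          if S.image (fun x => (T₀ x, (0 : Fin 1))) = s
            then Pr w {ω | XA ω = S} else 0) = 0 := by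
      intro T₀ _ hT₀
      rw [hsupp T₀ hT₀, zero_mul]
    rw [← Finset.sum_subset G.subset_univ vanish,
      Finset.sum_congr rfl fun T₀ hT₀ => by rw [hq T₀ (hG T₀ hT₀)], ← Finset.sum_mul]
    have : ∑ T₀ ∈ G, Pr w {ω | V ω = T₀} = 1 := by
      rw [Finset.sum_subset G.subset_univ fun T₀ _ hT₀ => hsupp T₀ hT₀, Pr_total w V, hw1]
    rw [this, one_mul]
  by_cases hT : T ∈ G
  · rw [hjoint T, hq T (hG T hT), hmarg]
  · rw [hmarg, hsupp T hT, zero_mul, hjoint T, hsupp T hT, zero_mul]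

set_option maxRecDepth 4000

def pe0 : Fin 4 → Fin 4 := ![0, 1, 2, 3]
def psg : Fin 4 → Fin 4 := ![1, 0, 2, 3]
def ptu : Fin 4 → Fin 4 := ![0, 1, 3, 2]
def prh : Fin 4 → Fin 4 := ![1, 0, 3, 2]


lemma logb22 : Real.logb 2 2 = 1 := Real.logb_self_eq_one (by norm_num)

lemma logb24 : Real.logb 2 4 = 2 := by
  have h4 : (4 : ℝ) = 2 ^ (2 : ℕ) := by norm_num
  rw [h4, Real.logb_pow, Real.logb_self_eq_one (by norm_num)]
  norm_num


/-- Example 1 of the paper.  Composition can strictly increase the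
privacy score: there exist a finite sample universe `X = Fin nX` with labeling function
`L` and families `F`, `F'` of exactly two bijections each, such that whenever `T_A` and
`T'_A` are independent random bijections, uniformly distributed on `F` and `F'`
respectively and independent of the random dataset `𝒳_A`, and the distribution of `𝒳_A`
satisfies Assumption 1, then `H(T_A | Obs(T_A)) = 1`, `H(T'_A | Obs(T'_A)) = 1`, while
`H(T'_A ∘ T_A | Obs(T'_A ∘ T_A)) = 2`. -/
theorem stmt7 :
    ∃ (nX nY : ℕ) (L : Fin nX → Fin nY) (F F' : Finset (Fin nX → Fin nX)),
      F.card = 2 ∧ F'.card = 2 ∧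
      (∀ T ∈ F, Function.Bijective T) ∧ (∀ T ∈ F', Function.Bijective T) ∧
      ∀ (Ω : Type) [Fintype Ω] (w : Ω → ℝ) (XA : Ω → Finset (Fin nX))
        (TA T'A : Ω → Fin nX → Fin nX),
        (∀ ω, 0 ≤ w ω) → (∑ ω, w ω = 1) →
        -- `T_A` is uniformly distributed on `F`
        (∀ T ∈ F, Pr w {ω | TA ω = T} = 1 / (F.card : ℝ)) →
        (∀ T ∉ F, Pr w {ω | TA ω = T} = 0) →
        -- `T'_A` is uniformly distributed on `F'`
        (∀ T ∈ F', Pr w {ω | T'A ω = T} = 1 / (F'.card : ℝ)) →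
        (∀ T ∉ F', Pr w {ω | T'A ω = T} = 0) →
        -- `T_A`, `T'_A`, `𝒳_A` are mutually independent
        (∀ (T T' : Fin nX → Fin nX) (S : Finset (Fin nX)),
          Pr w {ω | TA ω = T ∧ T'A ω = T' ∧ XA ω = S}
            = Pr w {ω | TA ω = T} * Pr w {ω | T'A ω = T'} * Pr w {ω | XA ω = S}) →
        -- Assumption 1: the distribution of `𝒳_A` depends only on the cardinality
        (∀ S₁ S₂ : Finset (Fin nX), S₁.card = S₂.card →
          Pr w {ω | XA ω = S₁} = Pr w {ω | XA ω = S₂}) →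
        condEntropy w TA (fun ω => (XA ω).image (fun x => (TA ω x, L x))) = 1 ∧
        condEntropy w T'A (fun ω => (XA ω).image (fun x => (T'A ω x, L x))) = 1 ∧
        condEntropy w (fun ω => T'A ω ∘ TA ω)
          (fun ω => (XA ω).image (fun x => (T'A ω (TA ω x), L x))) = 2 := by
  refine ⟨4, 1, fun _ => 0, {pe0, psg}, {pe0, ptu}, by decide, by decide, by decide,
    by decide, ?_⟩
  intro Ω _ w XA TA T'A hw hw1 hTAu hTA0 hT'Au hT'A0 htriple hA1
  have hXtotal : ∑ S : Finset (Fin 4), Pr w {ω | XA ω = S} = 1 := by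
    rw [Pr_total w XA, hw1]
  -- pairwise independence of TA and XA
  have hTX : ∀ T S, Pr w {ω | TA ω = T ∧ XA ω = S}
      = Pr w {ω | TA ω = T} * Pr w {ω | XA ω = S} := by
    intro T S
    rw [Pr_fiber w _ T'A]
    simp only [Set.mem_setOf_eq]
    have step : ∀ T', Pr w {ω | (TA ω = T ∧ XA ω = S) ∧ T'A ω = T'}
        = (Pr w {ω | TA ω = T} * Pr w {ω | XA ω = S}) * Pr w {ω | T'A ω = T'} := by
      intro T'
      have := htriple T T' S
      rw [show Pr w {ω | (TA ω = T ∧ XA ω = S) ∧ T'A ω = T'}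
          = Pr w {ω | TA ω = T ∧ T'A ω = T' ∧ XA ω = S} from
        Pr_congr fun ω => by simp only [Set.mem_setOf_eq]; tauto, this]
      ring
    rw [Finset.sum_congr rfl fun T' _ => step T', ← Finset.mul_sum, Pr_total w T'A, hw1,
      mul_one]
  -- pairwise independence of T'A and XA
  have hT'X : ∀ T' S, Pr w {ω | T'A ω = T' ∧ XA ω = S}
      = Pr w {ω | T'A ω = T'} * Pr w {ω | XA ω = S} := by
    intro T' S
    rw [Pr_fiber w _ TA]
    simp only [Set.mem_setOf_eq]
    have step : ∀ T, Pr w {ω | (T'A ω = T' ∧ XA ω = S) ∧ TA ω = T}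
        = (Pr w {ω | T'A ω = T'} * Pr w {ω | XA ω = S}) * Pr w {ω | TA ω = T} := by
      intro T
      have := htriple T T' S
      rw [show Pr w {ω | (T'A ω = T' ∧ XA ω = S) ∧ TA ω = T}
          = Pr w {ω | TA ω = T ∧ T'A ω = T' ∧ XA ω = S} from
        Pr_congr fun ω => by simp only [Set.mem_setOf_eq]; tauto, this]
      ring
    rw [Finset.sum_congr rfl fun T _ => step T, ← Finset.mul_sum, Pr_total w TA, hw1,
      mul_one]
  -- joint law of the composition with XA
  set cR : (Fin 4 → Fin 4) → ℝ := fun R =>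
    ∑ p : (Fin 4 → Fin 4) × (Fin 4 → Fin 4),
      if p.2 ∘ p.1 = R then Pr w {ω | TA ω = p.1} * Pr w {ω | T'A ω = p.2} else 0
    with hcRdef
  have hCX : ∀ R S, Pr w {ω | T'A ω ∘ TA ω = R ∧ XA ω = S}
      = cR R * Pr w {ω | XA ω = S} := by
    intro R S
    rw [Pr_fiber w _ (fun ω => (TA ω, T'A ω))]
    simp only [Set.mem_setOf_eq]
    have step : ∀ p : (Fin 4 → Fin 4) × (Fin 4 → Fin 4),
        Pr w {ω | (T'A ω ∘ TA ω = R ∧ XA ω = S) ∧ (TA ω, T'A ω) = p}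
        = (if p.2 ∘ p.1 = R
            then Pr w {ω | TA ω = p.1} * Pr w {ω | T'A ω = p.2} else 0)
          * Pr w {ω | XA ω = S} := by
      rintro ⟨T, T'⟩
      by_cases hp : T' ∘ T = R
      · rw [if_pos hp]
        rw [show Pr w {ω | (T'A ω ∘ TA ω = R ∧ XA ω = S) ∧ (TA ω, T'A ω) = (T, T')}
            = Pr w {ω | TA ω = T ∧ T'A ω = T' ∧ XA ω = S} from Pr_congr fun ω => by
          simp only [Set.mem_setOf_eq, Prod.mk.injEq]
          constructor
          · rintro ⟨⟨_, h2⟩, h3, h4⟩; exact ⟨h3, h4, h2⟩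
          · rintro ⟨h1, h2, h3⟩
            refine ⟨⟨?_, h3⟩, h1, h2⟩
            rw [h1, h2]; exact hp, htriple T T' S]
      · rw [if_neg hp, zero_mul]
        refine Pr_empty_of w fun ω hω => ?_
        simp only [Set.mem_setOf_eq, Prod.mk.injEq] at hω
        obtain ⟨⟨h1, _⟩, h3, h4⟩ := hω
        exact hp (by rw [← h3, ← h4]; exact h1)
    rw [Finset.sum_congr rfl fun p _ => step p, ← Finset.sum_mul]
  have hCR : ∀ R, Pr w {ω | T'A ω ∘ TA ω = R} = cR R := by
    intro R
    rw [Pr_fiber w _ XA]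
    simp only [Set.mem_setOf_eq]
    rw [Finset.sum_congr rfl fun S _ => hCX R S, ← Finset.mul_sum, hXtotal, mul_one]
  -- probabilities of individual bijections
  have hTAe0 : Pr w {ω | TA ω = pe0} = 1 / 2 := by
    rw [hTAu pe0 (by decide), show ({pe0, psg} : Finset (Fin 4 → Fin 4)).card = 2 by decide]
    norm_num
  have hTAsg : Pr w {ω | TA ω = psg} = 1 / 2 := by
    rw [hTAu psg (by decide), show ({pe0, psg} : Finset (Fin 4 → Fin 4)).card = 2 by decide]
    norm_num
  have hT'Ae0 : Pr w {ω | T'A ω = pe0} = 1 / 2 := by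
    rw [hT'Au pe0 (by decide), show ({pe0, ptu} : Finset (Fin 4 → Fin 4)).card = 2 by decide]
    norm_num
  have hT'Atu : Pr w {ω | T'A ω = ptu} = 1 / 2 := by
    rw [hT'Au ptu (by decide), show ({pe0, ptu} : Finset (Fin 4 → Fin 4)).card = 2 by decide]
    norm_num
  -- explicit value of cR
  have hprodsum : ∀ R, cR R
      = (if pe0 ∘ pe0 = R then Pr w {ω | TA ω = pe0} * Pr w {ω | T'A ω = pe0} else 0)
      + (if ptu ∘ pe0 = R then Pr w {ω | TA ω = pe0} * Pr w {ω | T'A ω = ptu} else 0)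
      + ((if pe0 ∘ psg = R then Pr w {ω | TA ω = psg} * Pr w {ω | T'A ω = pe0} else 0)
      + (if ptu ∘ psg = R then Pr w {ω | TA ω = psg} * Pr w {ω | T'A ω = ptu} else 0)) := by
    intro R
    rw [hcRdef]
    dsimp only
    rw [← Finset.sum_subset
      (Finset.subset_univ (({pe0, psg} ×ˢ {pe0, ptu}) : Finset (_ × _)))
      (fun p _ hp => ?_)]
    · rw [Finset.sum_product, Finset.sum_pair (by decide : pe0 ≠ psg),
        Finset.sum_pair (by decide : pe0 ≠ ptu), Finset.sum_pair (by decide : pe0 ≠ ptu)]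
    · rw [Finset.mem_product, not_and_or] at hp
      rcases hp with hp | hp
      · split
        · rw [hTA0 p.1 hp, zero_mul]
        · rfl
      · split
        · rw [hT'A0 p.2 hp, mul_zero]
        · rfl
  have hC1 : ∀ R ∈ ({pe0, psg, ptu, prh} : Finset (Fin 4 → Fin 4)),
      Pr w {ω | T'A ω ∘ TA ω = R} = 1 / 4 := by
    intro R hR
    rw [hCR R, hprodsum R, hTAe0, hTAsg, hT'Ae0, hT'Atu]
    simp only [Finset.mem_insert, Finset.mem_singleton] at hR
    rcases hR with rfl | rfl | rfl | rfl
    · rw [if_pos (by decide : pe0 ∘ pe0 = pe0), if_neg (by decide : ¬ptu ∘ pe0 = pe0),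
        if_neg (by decide : ¬pe0 ∘ psg = pe0), if_neg (by decide : ¬ptu ∘ psg = pe0)]
      norm_num
    · rw [if_neg (by decide : ¬pe0 ∘ pe0 = psg), if_neg (by decide : ¬ptu ∘ pe0 = psg),
        if_pos (by decide : pe0 ∘ psg = psg), if_neg (by decide : ¬ptu ∘ psg = psg)]
      norm_num
    · rw [if_neg (by decide : ¬pe0 ∘ pe0 = ptu), if_pos (by decide : ptu ∘ pe0 = ptu),
        if_neg (by decide : ¬pe0 ∘ psg = ptu), if_neg (by decide : ¬ptu ∘ psg = ptu)]
      norm_num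
    · rw [if_neg (by decide : ¬pe0 ∘ pe0 = prh), if_neg (by decide : ¬ptu ∘ pe0 = prh),
        if_neg (by decide : ¬pe0 ∘ psg = prh), if_pos (by decide : ptu ∘ psg = prh)]
      norm_num
  have hC0 : ∀ R ∉ ({pe0, psg, ptu, prh} : Finset (Fin 4 → Fin 4)),
      Pr w {ω | T'A ω ∘ TA ω = R} = 0 := by
    intro R hR
    rw [hCR R, hprodsum R,
      if_neg (fun (h : pe0 ∘ pe0 = R) => hR (h ▸ (by decide :
        pe0 ∘ pe0 ∈ ({pe0, psg, ptu, prh} : Finset (Fin 4 → Fin 4))))),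
      if_neg (fun (h : ptu ∘ pe0 = R) => hR (h ▸ (by decide :
        ptu ∘ pe0 ∈ ({pe0, psg, ptu, prh} : Finset (Fin 4 → Fin 4))))),
      if_neg (fun (h : pe0 ∘ psg = R) => hR (h ▸ (by decide :
        pe0 ∘ psg ∈ ({pe0, psg, ptu, prh} : Finset (Fin 4 → Fin 4))))),
      if_neg (fun (h : ptu ∘ psg = R) => hR (h ▸ (by decide :
        ptu ∘ psg ∈ ({pe0, psg, ptu, prh} : Finset (Fin 4 → Fin 4)))))]
    norm_num
  have hCXind : ∀ R S, Pr w {ω | T'A ω ∘ TA ω = R ∧ XA ω = S}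
      = Pr w {ω | T'A ω ∘ TA ω = R} * Pr w {ω | XA ω = S} := by
    intro R S
    rw [hCX R S, hCR R]
  -- the three conditional entropies
  refine ⟨?_, ?_, ?_⟩
  · have h1 := condEntropy_eq_entropy w hw hw1 TA
      (fun ω => (XA ω).image (fun x => (TA ω x, (0 : Fin 1))))
      (obs_indep w hw hw1 XA TA {pe0, psg} (by decide) hTA0 hTX hA1)
    have h2 := entropy_uniform w TA ({pe0, psg} : Finset (Fin 4 → Fin 4)) 2 (by decide)
      (by norm_num)
      (fun a ha => by
        rw [hTAu a ha, show ({pe0, psg} : Finset (Fin 4 → Fin 4)).card = 2 by decide]) hTA0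
    have h3 : Real.logb 2 ((2 : ℕ) : ℝ) = 1 := by rw [Nat.cast_ofNat, logb22]
    exact h1.trans (h2.trans h3)
  · have h1 := condEntropy_eq_entropy w hw hw1 T'A
      (fun ω => (XA ω).image (fun x => (T'A ω x, (0 : Fin 1))))
      (obs_indep w hw hw1 XA T'A {pe0, ptu} (by decide) hT'A0 hT'X hA1)
    have h2 := entropy_uniform w T'A ({pe0, ptu} : Finset (Fin 4 → Fin 4)) 2 (by decide)
      (by norm_num)
      (fun a ha => by
        rw [hT'Au a ha, show ({pe0, ptu} : Finset (Fin 4 → Fin 4)).card = 2 by decide]) hT'A0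
    have h3 : Real.logb 2 ((2 : ℕ) : ℝ) = 1 := by rw [Nat.cast_ofNat, logb22]
    exact h1.trans (h2.trans h3)
  · have h1 := condEntropy_eq_entropy w hw hw1 (fun ω => T'A ω ∘ TA ω)
      (fun ω => (XA ω).image (fun x => (T'A ω (TA ω x), (0 : Fin 1))))
      (obs_indep w hw hw1 XA (fun ω => T'A ω ∘ TA ω) {pe0, psg, ptu, prh} (by decide)
        hC0 hCXind hA1)
    have h2 := entropy_uniform w (fun ω => T'A ω ∘ TA ω)
      ({pe0, psg, ptu, prh} : Finset (Fin 4 → Fin 4)) 4 (by decide) (by norm_num)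
      (fun a ha => by rw [hC1 a ha]; norm_num) hC0
    have h3 : Real.logb 2 ((4 : ℕ) : ℝ) = 2 := by rw [Nat.cast_ofNat, logb24]
    exact h1.trans (h2.trans h3)
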